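/- arXiv:2306.17370 — 4 statements merged into one kernel-verified Lean document; each statement's English description precedes it below -/
import Mathlib

section
/- Let O be a finite nonempty set, let ε ≥ 0 and Δ > 0 be real numbers, and let f, g : O → ℝ satisfy |f(w) − g(w)| ≤ Δ for all w ∈ O. Define P[f](w) = exp(ε·f(w)/(2Δ)) / Σ_{w'∈O} exp(ε·f(w')/(2Δ)) and P[g](w) = exp(ε·g(w)/(2Δ)) / Σ_{w'∈O} exp(ε·g(w')/(2Δ)). Then for every w ∈ O, P[f](w) ≤ exp(ε) · P[g](w). -/
open Real

theorem stmt_2 {O : Type*} [Fintype O] [Nonempty O]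
    (ε Δ : ℝ) (hε : 0 ≤ ε) (hΔ : 0 < Δ)
    (f g : O → ℝ) (hfg : ∀ w : O, |f w - g w| ≤ Δ) :
    ∀ w : O,
      Real.exp (ε * f w / (2 * Δ)) / (∑ w' : O, Real.exp (ε * f w' / (2 * Δ))) ≤
        Real.exp ε *
          (Real.exp (ε * g w / (2 * Δ)) / (∑ w' : O, Real.exp (ε * g w' / (2 * Δ)))) := by
  intro w
  have h2Δ : (0:ℝ) < 2 * Δ := by linarith
  have key : ∀ (a b : O → ℝ), (∀ v, |a v - b v| ≤ Δ) → ∀ v,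
      Real.exp (ε * a v / (2 * Δ)) ≤ Real.exp (ε / 2) * Real.exp (ε * b v / (2 * Δ)) := by
    intro a b hab v
    rw [← Real.exp_add]
    apply Real.exp_le_exp.mpr
    have h1 : a v - b v ≤ Δ := (abs_le.mp (hab v)).2
    rw [div_le_iff₀ h2Δ, add_mul, div_mul_cancel₀ _ (ne_of_gt h2Δ)]
    have : ε * a v - ε * b v ≤ ε * Δ := by
      calc ε * a v - ε * b v = ε * (a v - b v) := by ring
        _ ≤ ε * Δ := mul_le_mul_of_nonneg_left h1 hε
    nlinarith
  have hgf : ∀ v, |g v - f v| ≤ Δ := fun v => by rw [abs_sub_comm]; exact hfg v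
  have Sf_pos : 0 < ∑ w' : O, Real.exp (ε * f w' / (2 * Δ)) :=
    Finset.sum_pos (fun i _ => Real.exp_pos _) Finset.univ_nonempty
  have Sg_pos : 0 < ∑ w' : O, Real.exp (ε * g w' / (2 * Δ)) :=
    Finset.sum_pos (fun i _ => Real.exp_pos _) Finset.univ_nonempty
  have hnum := key f g hfg w
  have hden : (∑ w' : O, Real.exp (ε * g w' / (2 * Δ))) ≤
      Real.exp (ε / 2) * ∑ w' : O, Real.exp (ε * f w' / (2 * Δ)) := by
    rw [Finset.mul_sum]
    exact Finset.sum_le_sum fun i _ => key g f hgf i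
  have hinv : 1 / (∑ w' : O, Real.exp (ε * f w' / (2 * Δ))) ≤
      Real.exp (ε / 2) / (∑ w' : O, Real.exp (ε * g w' / (2 * Δ))) := by
    rw [div_le_div_iff₀ Sf_pos Sg_pos]
    linarith
  calc Real.exp (ε * f w / (2 * Δ)) / (∑ w' : O, Real.exp (ε * f w' / (2 * Δ)))
      = Real.exp (ε * f w / (2 * Δ)) * (1 / (∑ w' : O, Real.exp (ε * f w' / (2 * Δ)))) := by
        ring
    _ ≤ (Real.exp (ε / 2) * Real.exp (ε * g w / (2 * Δ))) *
        (Real.exp (ε / 2) / (∑ w' : O, Real.exp (ε * g w' / (2 * Δ)))) := by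
        apply mul_le_mul hnum hinv (by positivity) (by positivity)
    _ = (Real.exp (ε / 2) * Real.exp (ε / 2)) *
        (Real.exp (ε * g w / (2 * Δ)) / (∑ w' : O, Real.exp (ε * g w' / (2 * Δ)))) := by
        ring
    _ = Real.exp ε *
        (Real.exp (ε * g w / (2 * Δ)) / (∑ w' : O, Real.exp (ε * g w' / (2 * Δ)))) := by
        rw [← Real.exp_add]; norm_num
end

section
/- Let O be a finite nonempty set, let ε ≥ 0 and Δ > 0 be real numbers, and let f, g : O → ℝ satisfy |f(w) − g(w)| ≤ Δ for all w ∈ O. Define P[f](w) = exp(ε·f(w)/(2Δ)) / Σ_{w'∈O} exp(ε·f(w')/(2Δ)) and similarly P[g]. Then for every w ∈ O, exp(−ε) · P[g](w) ≤ P[f](w) ≤ exp(ε) · P[g](w). -/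
open Real

lemma aux_one_sided {O : Type*} [Fintype O] [Nonempty O]
    (ε Δ : ℝ) (hε : 0 ≤ ε) (hΔ : 0 < Δ)
    (f g : O → ℝ) (hfg : ∀ w : O, |f w - g w| ≤ Δ) (w : O) :
    Real.exp (ε * f w / (2 * Δ)) / (∑ w' : O, Real.exp (ε * f w' / (2 * Δ))) ≤
      Real.exp ε *
        (Real.exp (ε * g w / (2 * Δ)) / (∑ w' : O, Real.exp (ε * g w' / (2 * Δ)))) := by
  have hSf : 0 < ∑ w' : O, Real.exp (ε * f w' / (2 * Δ)) :=
    Finset.sum_pos (fun _ _ => Real.exp_pos _) Finset.univ_nonempty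
  have hSg : 0 < ∑ w' : O, Real.exp (ε * g w' / (2 * Δ)) :=
    Finset.sum_pos (fun _ _ => Real.exp_pos _) Finset.univ_nonempty
  have hhalf : ∀ a b : ℝ, a - b ≤ Δ → ε * a / (2 * Δ) ≤ ε / 2 + ε * b / (2 * Δ) := by
    intro a b hab
    have h3 : ε * a ≤ ε * b + ε * Δ := by nlinarith
    calc ε * a / (2 * Δ) ≤ (ε * b + ε * Δ) / (2 * Δ) := by gcongr
      _ = ε / 2 + ε * b / (2 * Δ) := by field_simp; ring
  have hnum : Real.exp (ε * f w / (2 * Δ)) ≤ Real.exp (ε / 2) * Real.exp (ε * g w / (2 * Δ)) := by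
    rw [← Real.exp_add]
    exact Real.exp_le_exp.mpr (hhalf _ _ (abs_le.mp (hfg w)).2)
  have hden : (∑ w' : O, Real.exp (ε * g w' / (2 * Δ))) ≤
      Real.exp (ε / 2) * ∑ w' : O, Real.exp (ε * f w' / (2 * Δ)) := by
    rw [Finset.mul_sum]
    refine Finset.sum_le_sum fun i _ => ?_
    rw [← Real.exp_add]
    refine Real.exp_le_exp.mpr (hhalf _ _ ?_)
    linarith [(abs_le.mp (hfg i)).1]
  have key : Real.exp (ε * f w / (2 * Δ)) / (∑ w' : O, Real.exp (ε * f w' / (2 * Δ))) ≤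
      (Real.exp (ε / 2) * Real.exp (ε * g w / (2 * Δ))) /
        ((∑ w' : O, Real.exp (ε * g w' / (2 * Δ))) / Real.exp (ε / 2)) := by
    apply div_le_div₀ (by positivity) hnum (by positivity)
    rw [div_le_iff₀ (Real.exp_pos _)]
    linarith [hden]
  refine key.trans_eq ?_
  rw [div_div_eq_mul_div, ← mul_div_assoc (Real.exp ε)]
  congr 1
  rw [← Real.exp_add, ← Real.exp_add, ← Real.exp_add]
  congr 1
  ring

theorem stmt_3 {O : Type*} [Fintype O] [Nonempty O]
    (ε Δ : ℝ) (hε : 0 ≤ ε) (hΔ : 0 < Δ)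
    (f g : O → ℝ) (hfg : ∀ w : O, |f w - g w| ≤ Δ) :
    ∀ w : O,
      Real.exp (-ε) *
          (Real.exp (ε * g w / (2 * Δ)) / (∑ w' : O, Real.exp (ε * g w' / (2 * Δ)))) ≤
        Real.exp (ε * f w / (2 * Δ)) / (∑ w' : O, Real.exp (ε * f w' / (2 * Δ))) ∧
      Real.exp (ε * f w / (2 * Δ)) / (∑ w' : O, Real.exp (ε * f w' / (2 * Δ))) ≤
        Real.exp ε *
          (Real.exp (ε * g w / (2 * Δ)) / (∑ w' : O, Real.exp (ε * g w' / (2 * Δ)))) := by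
  intro w
  refine ⟨?_, aux_one_sided ε Δ hε hΔ f g hfg w⟩
  have h := aux_one_sided ε Δ hε hΔ g f (fun w => by rw [abs_sub_comm]; exact hfg w) w
  calc Real.exp (-ε) *
          (Real.exp (ε * g w / (2 * Δ)) / (∑ w' : O, Real.exp (ε * g w' / (2 * Δ))))
      ≤ Real.exp (-ε) * (Real.exp ε *
          (Real.exp (ε * f w / (2 * Δ)) / (∑ w' : O, Real.exp (ε * f w' / (2 * Δ))))) :=
        mul_le_mul_of_nonneg_left h (Real.exp_pos _).le
    _ = Real.exp (ε * f w / (2 * Δ)) / (∑ w' : O, Real.exp (ε * f w' / (2 * Δ))) := by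
        rw [← mul_assoc, ← Real.exp_add]
        simp
end

section
/- Let O be a finite nonempty set, let ε ≥ 0 and Δ > 0 be real numbers, and let f, g : O → ℝ satisfy |f(w) − g(w)| ≤ Δ for all w ∈ O. Define P[f](w) = exp(ε·f(w)/(2Δ)) / Σ_{w'∈O} exp(ε·f(w')/(2Δ)) and similarly P[g]. Then for every subset S ⊆ O, Σ_{w∈S} P[f](w) ≤ exp(ε) · Σ_{w∈S} P[g](w). -/
open Real

theorem stmt_4 {O : Type*} [Fintype O] [Nonempty O]
    (ε Δ : ℝ) (hε : 0 ≤ ε) (hΔ : 0 < Δ)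
    (f g : O → ℝ) (hfg : ∀ w : O, |f w - g w| ≤ Δ) :
    ∀ S : Finset O,
      ∑ w ∈ S, Real.exp (ε * f w / (2 * Δ)) / (∑ w' : O, Real.exp (ε * f w' / (2 * Δ))) ≤
        Real.exp ε *
          ∑ w ∈ S, Real.exp (ε * g w / (2 * Δ)) / (∑ w' : O, Real.exp (ε * g w' / (2 * Δ))) := by
  intro S
  set A := ∑ w' : O, Real.exp (ε * f w' / (2 * Δ)) with hA
  set B := ∑ w' : O, Real.exp (ε * g w' / (2 * Δ)) with hB
  have hApos : 0 < A := Finset.sum_pos (fun i _ => Real.exp_pos _) Finset.univ_nonempty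
  have hBpos : 0 < B := Finset.sum_pos (fun i _ => Real.exp_pos _) Finset.univ_nonempty
  have key : ∀ w : O, Real.exp (ε * f w / (2 * Δ)) ≤
      Real.exp (ε / 2) * Real.exp (ε * g w / (2 * Δ)) := by
    intro w
    rw [← Real.exp_add]
    apply Real.exp_le_exp.mpr
    have h1 : f w - g w ≤ Δ := (abs_le.mp (hfg w)).2
    have : ε * f w / (2 * Δ) - ε * g w / (2 * Δ) ≤ ε / 2 := by
      rw [div_sub_div_same, ← mul_sub]
      rw [div_le_div_iff₀ (by positivity) (by norm_num : (0:ℝ) < 2)]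
      calc ε * (f w - g w) * 2 ≤ ε * Δ * 2 := by
            have := mul_le_mul_of_nonneg_left h1 hε
            nlinarith
        _ = ε * (2 * Δ) := by ring
    linarith
  have keyB : ∀ w : O, Real.exp (ε * g w / (2 * Δ)) ≤
      Real.exp (ε / 2) * Real.exp (ε * f w / (2 * Δ)) := by
    intro w
    rw [← Real.exp_add]
    apply Real.exp_le_exp.mpr
    have h1 : g w - f w ≤ Δ := by
      have := (abs_le.mp (hfg w)).1; linarith
    have : ε * g w / (2 * Δ) - ε * f w / (2 * Δ) ≤ ε / 2 := by
      rw [div_sub_div_same, ← mul_sub]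
      rw [div_le_div_iff₀ (by positivity) (by norm_num : (0:ℝ) < 2)]
      calc ε * (g w - f w) * 2 ≤ ε * Δ * 2 := by
            have := mul_le_mul_of_nonneg_left h1 hε
            nlinarith
        _ = ε * (2 * Δ) := by ring
    linarith
  have hBA : B ≤ Real.exp (ε / 2) * A := by
    rw [hB, hA, Finset.mul_sum]
    exact Finset.sum_le_sum fun w _ => keyB w
  rw [Finset.mul_sum]
  apply Finset.sum_le_sum
  intro w _
  have h1 : Real.exp (ε * f w / (2 * Δ)) / A ≤
      Real.exp (ε / 2) * Real.exp (ε * g w / (2 * Δ)) / A := by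
    gcongr
    exact key w
  have h2 : Real.exp (ε / 2) * Real.exp (ε * g w / (2 * Δ)) / A ≤
      Real.exp ε * (Real.exp (ε * g w / (2 * Δ)) / B) := by
    rw [div_le_iff₀ hApos]
    have : Real.exp ε * (Real.exp (ε * g w / (2 * Δ)) / B) * A =
        Real.exp ε * Real.exp (ε * g w / (2 * Δ)) * (A / B) := by ring
    rw [this]
    have hAB : Real.exp (-(ε/2)) ≤ A / B := by
      rw [le_div_iff₀ hBpos, Real.exp_neg]
      rw [inv_mul_le_iff₀ (Real.exp_pos _)]
      linarith
    calc Real.exp (ε / 2) * Real.exp (ε * g w / (2 * Δ))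
        = Real.exp ε * Real.exp (ε * g w / (2 * Δ)) * Real.exp (-(ε/2)) := by
          rw [mul_assoc, mul_comm (Real.exp _) (Real.exp (-(ε/2))), ← mul_assoc,
            ← Real.exp_add, ← Real.exp_add]; ring_nf; rw [Real.exp_add]
      _ ≤ Real.exp ε * Real.exp (ε * g w / (2 * Δ)) * (A / B) := by
          apply mul_le_mul_of_nonneg_left hAB (by positivity)
  exact h1.trans h2
end

section
/- Let O be a finite nonempty set, let ε ≥ 0 and Δ > 0 be real numbers, and let f, g : O → ℝ satisfy |f(w) − g(w)| ≤ Δ for all w ∈ O. Define P[f](w) = exp(ε·f(w)/(2Δ)) / Σ_{w'∈O} exp(ε·f(w')/(2Δ)) and similarly P[g]. Then for any set O₂, any map h : O → O₂ and any s ∈ O₂, Σ_{w∈O, h(w)=s} P[f](w) ≤ exp(ε) · Σ_{w∈O, h(w)=s} P[g](w). -/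
open Real

theorem stmt_5 {O : Type*} [Fintype O] [Nonempty O]
    (ε Δ : ℝ) (hε : 0 ≤ ε) (hΔ : 0 < Δ)
    (f g : O → ℝ) (hfg : ∀ w : O, |f w - g w| ≤ Δ)
    (O₂ : Type*) [DecidableEq O₂] (h : O → O₂) (s : O₂) :
    ∑ w ∈ Finset.univ.filter (fun w => h w = s),
        Real.exp (ε * f w / (2 * Δ)) / (∑ w' : O, Real.exp (ε * f w' / (2 * Δ))) ≤
      Real.exp ε *
        ∑ w ∈ Finset.univ.filter (fun w => h w = s),
          Real.exp (ε * g w / (2 * Δ)) / (∑ w' : O, Real.exp (ε * g w' / (2 * Δ))) := by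
  set Sf := ∑ w' : O, Real.exp (ε * f w' / (2 * Δ)) with hSf
  set Sg := ∑ w' : O, Real.exp (ε * g w' / (2 * Δ)) with hSg
  have hSfpos : 0 < Sf := Finset.sum_pos (fun i _ => Real.exp_pos _) ⟨Classical.arbitrary O, Finset.mem_univ _⟩
  have hSgpos : 0 < Sg := Finset.sum_pos (fun i _ => Real.exp_pos _) ⟨Classical.arbitrary O, Finset.mem_univ _⟩
  -- pointwise numerator bound
  have hnum : ∀ w : O, Real.exp (ε * f w / (2 * Δ)) ≤ Real.exp (ε / 2) * Real.exp (ε * g w / (2 * Δ)) := by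
    intro w
    rw [← Real.exp_add]
    apply Real.exp_le_exp.2
    have hfw : f w ≤ g w + Δ := by
      have := (abs_le.1 (hfg w)).2; linarith
    rw [div_le_iff₀ (by linarith : (0:ℝ) < 2 * Δ)]
    have h2 : ε / 2 + ε * g w / (2 * Δ) = (ε * Δ + ε * g w) / (2 * Δ) := by
      field_simp
    rw [h2, div_mul_cancel₀ _ (by linarith : (2*Δ) ≠ 0)]
    nlinarith
  -- denominator bound
  have hden : Sg ≤ Real.exp (ε / 2) * Sf := by
    rw [hSg, hSf, Finset.mul_sum]
    apply Finset.sum_le_sum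
    intro i _
    rw [← Real.exp_add]
    apply Real.exp_le_exp.2
    have hgw : g i ≤ f i + Δ := by
      have := (abs_le.1 (hfg i)).1; linarith
    rw [div_le_iff₀ (by linarith : (0:ℝ) < 2 * Δ)]
    have h2 : ε / 2 + ε * f i / (2 * Δ) = (ε * Δ + ε * f i) / (2 * Δ) := by
      field_simp
    rw [h2, div_mul_cancel₀ _ (by linarith : (2*Δ) ≠ 0)]
    nlinarith
  rw [Finset.mul_sum]
  apply Finset.sum_le_sum
  intro w _
  rw [div_le_iff₀ hSfpos, mul_comm (Real.exp ε), mul_assoc, div_mul_eq_mul_div, le_div_iff₀ hSgpos]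
  calc Real.exp (ε * f w / (2 * Δ)) * Sg
      ≤ (Real.exp (ε / 2) * Real.exp (ε * g w / (2 * Δ))) * (Real.exp (ε / 2) * Sf) := by
        apply mul_le_mul (hnum w) hden (le_of_lt hSgpos)
        positivity
    _ = Real.exp (ε * g w / (2 * Δ)) * (Real.exp ε * Sf) := by
        have he : Real.exp (ε/2) * Real.exp (ε/2) = Real.exp ε := by
          rw [← Real.exp_add]; norm_num
        rw [← he]; ring
end
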